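/- Welford's single-pass update is correct: define m₀ = 0, M₀ = 0, and recursively m_n = m_{n−1} + (x_n − m_{n−1})/n and M_n = M_{n−1} + (x_n − m_{n−1})(x_n − m_n). Then for every n ≥ 1, m_n = (1/n) Σ_{i=1}^n x_i and M_n = Σ_{i=1}^n (x_i − m_n)². -/

import Mathlib

open Finset

/-!
Writing `e = m_{n+1} - m_n`, the mean update says `x_{n+1} - m_n = (n+1) e`. The invariant
`∑_{i ≤ n} x_i = n m_n` is then preserved, and moving the centre of the first `n` squared
deviations from `m_n` to `m_{n+1}` costs `n e²` (a parallel-axis identity); together with the new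
term `(x_{n+1} - m_{n+1})² = n² e²` this is exactly `(x_{n+1} - m_n)(x_{n+1} - m_{n+1})`.
-/

theorem sum_sub_sq_eq_sum_sub_sq_add {ι R : Type*} [CommRing R] (s : Finset ι) (f : ι → R)
    {a : R} (c : R) (ha : ∑ i ∈ s, f i = #s * a) :
    ∑ i ∈ s, (f i - c) ^ 2 = ∑ i ∈ s, (f i - a) ^ 2 + #s * (a - c) ^ 2 := by
  have expand : ∀ i, (f i - c) ^ 2 = (f i - a) ^ 2 + (2 * (a - c) * f i - (a ^ 2 - c ^ 2)) :=
    fun i => by ring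
  simp only [expand, sum_add_distrib, sum_sub_distrib, ← mul_sum, sum_const, nsmul_eq_mul, ha]
  ring

section WelfordStep

variable {R : Type*} [CommRing R] {n m m' y : R}

theorem welford_sum_step (h : (n + 1) * (m' - m) = y - m) : n * m + y = (n + 1) * m' := by
  linear_combination -h

theorem welford_sq_step (h : (n + 1) * (m' - m) = y - m) :
    n * (m - m') ^ 2 + (y - m') ^ 2 = (y - m) * (y - m') := by
  linear_combination (m' - m) * h

end WelfordStep

/-- Correctness of Welford's single-pass recursion: the running mean equals the batch
mean and the running `M` equals the batch sum of squared deviations. -/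
theorem welford_correct
    (x m M : ℕ → ℝ)
    (hm0 : m 0 = 0) (hM0 : M 0 = 0)
    (hm : ∀ n : ℕ, 1 ≤ n → m n = m (n - 1) + (x n - m (n - 1)) / n)
    (hM : ∀ n : ℕ, 1 ≤ n → M n = M (n - 1) + (x n - m (n - 1)) * (x n - m n)) :
    ∀ n : ℕ, 1 ≤ n →
      m n = (∑ i ∈ Finset.Icc 1 n, x i) / n ∧
      M n = ∑ i ∈ Finset.Icc 1 n, (x i - m n) ^ 2 := by
  have invariant : ∀ n : ℕ, ∑ i ∈ Icc 1 n, x i = n * m n ∧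
      M n = ∑ i ∈ Icc 1 n, (x i - m n) ^ 2 := by
    intro n
    induction n with
    | zero => simp [hm0, hM0]
    | succ n ih =>
      have hmean := hm (n + 1) (Nat.le_add_left 1 n)
      have hvar := hM (n + 1) (Nat.le_add_left 1 n)
      rw [Nat.add_sub_cancel, Nat.cast_succ] at hmean
      rw [Nat.add_sub_cancel] at hvar
      have hstep : ((n : ℝ) + 1) * (m (n + 1) - m n) = x (n + 1) - m n := by
        rw [hmean, add_sub_cancel_left, mul_div_cancel₀ _ n.cast_add_one_ne_zero]
      have hcard : (#(Icc 1 n) : ℝ) = n := by simp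
      rw [sum_Icc_succ_top (Nat.le_add_left 1 n), sum_Icc_succ_top (Nat.le_add_left 1 n),
        sum_sub_sq_eq_sum_sub_sq_add _ _ _ (hcard ▸ ih.1), hcard, ← ih.2, ih.1, hvar,
        add_assoc, welford_sq_step hstep, Nat.cast_succ]
      exact ⟨welford_sum_step hstep, rfl⟩
  intro n hn
  obtain ⟨hsum, hvar⟩ := invariant n
  have hn0 : (n : ℝ) ≠ 0 := Nat.cast_ne_zero.mpr (Nat.one_le_iff_ne_zero.mp hn)
  exact ⟨by rw [hsum, mul_div_cancel_left₀ _ hn0], hvar⟩
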